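/- Let B be a weak Hopf *-algebra with right adjoint action b ◁ x := S(x₍₁₎) b x₍₂₎, and let I and I' be invariant coideals of B. Then I ∩ I' and the *-subalgebra of B generated by I ∪ I' are again invariant coideals of B. Thus the invariant coideals of B form a sublattice of the lattice of all coideals, with minimal element B_s and maximal element the commutant of B_t in B. -/

import Mathlib

open scoped TensorProduct
open TensorProduct

noncomputable section

/-- The conjugate-linear "star" operation on a tensor product of two star modules,
defined via a choice of bases so that `star (x ⊗ y) = star x ⊗ star y`. -/
def tensorStar (M N : Type) [AddCommGroup M] [Module ℂ M] [Module.Finite ℂ M]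
    [Module.Free ℂ M] [StarAddMonoid M] [AddCommGroup N] [Module ℂ N] [Module.Finite ℂ N]
    [Module.Free ℂ N] [StarAddMonoid N] (t : M ⊗[ℂ] N) : M ⊗[ℂ] N :=
  let bM := Module.Free.chooseBasis ℂ M
  let bN := Module.Free.chooseBasis ℂ N
  ∑ p : Module.Free.ChooseBasisIndex ℂ M × Module.Free.ChooseBasisIndex ℂ N,
    (starRingEnd ℂ) (((bM.tensorProduct bN).repr t) p) • (star (bM p.1) ⊗ₜ[ℂ] star (bN p.2))

/-- A weak Hopf `*`-algebra structure on a finite-dimensional `C*`-algebra `B`. -/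
structure WHA (B : Type) [NormedRing B] [StarRing B] [CStarRing B] [NormedAlgebra ℂ B]
    [StarModule ℂ B] [FiniteDimensional ℂ B] where
  Δ : B →ₗ[ℂ] B ⊗[ℂ] B
  ε : B →ₗ[ℂ] ℂ
  S : B →ₗ[ℂ] B
  coassoc : ∀ b : B, (TensorProduct.assoc ℂ B B B) ((TensorProduct.map Δ LinearMap.id) (Δ b)) =
    (TensorProduct.map LinearMap.id Δ) (Δ b)
  counit_left : ∀ b : B, (TensorProduct.lid ℂ B) ((TensorProduct.map ε LinearMap.id) (Δ b)) = b
  counit_right : ∀ b : B, (TensorProduct.rid ℂ B) ((TensorProduct.map LinearMap.id ε) (Δ b)) = b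
  comul_mul : ∀ a b : B, Δ (a * b) = Δ a * Δ b
  weak_counit : ∀ b c d : B, (TensorProduct.lid ℂ ℂ)
      ((TensorProduct.map (ε ∘ₗ LinearMap.mulLeft ℂ b) (ε ∘ₗ LinearMap.mulRight ℂ d)) (Δ c)) =
    ε (b * c * d)
  weak_comul_one : (TensorProduct.map Δ LinearMap.id) (Δ 1) =
    (Δ 1 ⊗ₜ[ℂ] (1 : B)) * ((TensorProduct.assoc ℂ B B B).symm ((1 : B) ⊗ₜ[ℂ] Δ 1))
  comul_star : ∀ b : B, Δ (star b) = tensorStar B B (Δ b)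
  antipode_mul : ∀ a b : B, S (a * b) = S b * S a
  antipode_one : S 1 = 1
  antipode_comul : ∀ b : B, Δ (S b) =
    (TensorProduct.map S S) ((TensorProduct.comm ℂ B B) (Δ b))
  counit_antipode : ∀ b : B, ε (S b) = ε b
  antipode_left : ∀ b : B, LinearMap.mul' ℂ B ((TensorProduct.map LinearMap.id S) (Δ b)) =
    (TensorProduct.lid ℂ B) ((TensorProduct.map ε LinearMap.id) (Δ 1 * (b ⊗ₜ[ℂ] (1 : B))))
  antipode_right : ∀ b : B, LinearMap.mul' ℂ B ((TensorProduct.map S LinearMap.id) (Δ b)) =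
    (TensorProduct.rid ℂ B) ((TensorProduct.map LinearMap.id ε) (((1 : B) ⊗ₜ[ℂ] b) * Δ 1))

namespace WHA

variable {B : Type} [NormedRing B] [StarRing B] [CStarRing B] [NormedAlgebra ℂ B]
  [StarModule ℂ B] [FiniteDimensional ℂ B]

/-- The target counital map `ε_t(b) = (ε ⊗ id)(Δ(1)(b ⊗ 1))`. -/
def εt (W : WHA B) (b : B) : B :=
  (TensorProduct.lid ℂ B) ((TensorProduct.map W.ε LinearMap.id) (W.Δ 1 * (b ⊗ₜ[ℂ] (1 : B))))

/-- The source counital map `ε_s(b) = (id ⊗ ε)((1 ⊗ b)Δ(1))`. -/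
def εs (W : WHA B) (b : B) : B :=
  (TensorProduct.rid ℂ B) ((TensorProduct.map LinearMap.id W.ε) (((1 : B) ⊗ₜ[ℂ] b) * W.Δ 1))

/-- The target counital subalgebra `B_t = ε_t(B)`. -/
def Bt (W : WHA B) : Submodule ℂ B := Submodule.span ℂ (Set.range W.εt)

/-- The source counital subalgebra `B_s = ε_s(B)`. -/
def Bs (W : WHA B) : Submodule ℂ B := Submodule.span ℂ (Set.range W.εs)

/-- The right adjoint action `b ◁ x = S(x₍₁₎) b x₍₂₎`. -/
def ad (W : WHA B) (b x : B) : B :=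
  LinearMap.mul' ℂ B ((TensorProduct.map W.S (LinearMap.mulLeft ℂ b)) (W.Δ x))

/-- `I` is a (right) coideal of `B`: a unital `*`-subalgebra with `Δ(I) ⊆ I ⊗ B`. -/
def IsCoideal (W : WHA B) (I : Submodule ℂ B) : Prop :=
  (1 : B) ∈ I ∧ (∀ a ∈ I, ∀ b ∈ I, a * b ∈ I) ∧ (∀ a ∈ I, star a ∈ I) ∧
    ∀ a ∈ I, W.Δ a ∈ Submodule.span ℂ {x : B ⊗[ℂ] B | ∃ u ∈ I, ∃ v : B, x = u ⊗ₜ[ℂ] v}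

/-- A coideal is invariant if `span{ b ◁ x : b ∈ I, x ∈ B } = I`. -/
def IsInvariant (W : WHA B) (I : Submodule ℂ B) : Prop :=
  Submodule.span ℂ {y : B | ∃ b ∈ I, ∃ x : B, y = W.ad b x} = I

end WHA

/-- A morphism of weak Hopf `*`-algebras. -/
structure WHAHom {B C : Type} [NormedRing B] [StarRing B] [CStarRing B] [NormedAlgebra ℂ B]
    [StarModule ℂ B] [FiniteDimensional ℂ B] [NormedRing C] [StarRing C] [CStarRing C]
    [NormedAlgebra ℂ C] [StarModule ℂ C] [FiniteDimensional ℂ C]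
    (W : WHA B) (W' : WHA C) where
  π : B →⋆ₐ[ℂ] C
  comul_comp : ∀ b : B, W'.Δ (π b) = (TensorProduct.map π.toLinearMap π.toLinearMap) (W.Δ b)
  antipode_comp : ∀ b : B, W'.S (π b) = π (W.S b)
  counit_comp : ∀ b : B, W'.ε (π b) = W.ε b

/-!
Every element `b ◁ x` commutes with `B_t`, and `b ◁ 1 = b` whenever `b` commutes with `B_t`.
Hence a coideal `J` is invariant exactly when it is stable under `◁` and lies in the commutant
of `B_t`. Both conditions pass to `I ∩ I'`, and to the algebra generated by `I ∪ I'` because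
`(b c) ◁ x = (b ◁ x₁)(c ◁ x₂)` when `b` commutes with `B_t`. Since `1 ◁ x = ε_s(x)`, every
invariant coideal contains `B_s`.

The commutation comes from `b ◁ x = (b ◁ x) ◁ 1 = S(1₁)(b ◁ x)1₂`, from
`S(1₁) ⊗ 1₂ = ε_t(1₁) ⊗ 1₂`, and from `(z ⊗ 1)(ε_t(1₁) ⊗ 1₂) = (ε_t(1₁) ⊗ 1₂)(1 ⊗ z)` for
`z ∈ B_t`. These need both forms `(Δ(1) ⊗ 1)(1 ⊗ Δ(1)) = Δ²(1) = (1 ⊗ Δ(1))(Δ(1) ⊗ 1)` of the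
weak comultiplication axiom; the second is the image of the first under `*`.
-/

theorem tensorStar_eq_star {M N : Type} [AddCommGroup M] [Module ℂ M] [Module.Finite ℂ M]
    [Module.Free ℂ M] [StarAddMonoid M] [StarModule ℂ M] [AddCommGroup N] [Module ℂ N]
    [Module.Finite ℂ N] [Module.Free ℂ N] [StarAddMonoid N] [StarModule ℂ N]
    (t : M ⊗[ℂ] N) : tensorStar M N t = star t := by
  let b := (Module.Free.chooseBasis ℂ M).tensorProduct (Module.Free.chooseBasis ℂ N)
  conv_rhs => rw [← b.sum_repr t]
  rw [star_sum]
  refine Finset.sum_congr rfl fun p _ => ?_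
  rw [star_smul, Module.Basis.tensorProduct_apply, star_tmul]
  rfl

def spanTmul {K M : Type*} [CommRing K] [AddCommGroup M] [Module K M] (s : Set M) (N : Type*)
    [AddCommGroup N] [Module K N] : Submodule K (M ⊗[K] N) :=
  Submodule.span K {x | ∃ u ∈ s, ∃ v : N, x = u ⊗ₜ[K] v}

section SpanTmul

variable {K M N : Type*} [CommRing K] [AddCommGroup M] [Module K M] [AddCommGroup N] [Module K N]

theorem spanTmul_mono {s t : Set M} (h : s ⊆ t) : spanTmul (K := K) s N ≤ spanTmul t N :=
  Submodule.span_mono fun _ ⟨u, hu, v, hx⟩ => ⟨u, h hu, v, hx⟩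

theorem rid_map_mem_of_mem_spanTmul {P : Submodule K M} (f : N →ₗ[K] K) {x : M ⊗[K] N}
    (hx : x ∈ spanTmul (P : Set M) N) : TensorProduct.rid K M (map LinearMap.id f x) ∈ P := by
  induction hx using Submodule.span_induction with
  | mem x hx =>
    obtain ⟨u, hu, v, rfl⟩ := hx
    simpa using P.smul_mem (f v) hu
  | zero => simp
  | add x y _ _ hx hy => simpa using P.add_mem hx hy
  | smul c x _ hx => simpa using P.smul_mem c hx

theorem mem_spanTmul_inf [Module.Free K N] [Module.Finite K N] {P Q : Submodule K M} {x : M ⊗[K] N}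
    (hP : x ∈ spanTmul (P : Set M) N) (hQ : x ∈ spanTmul (Q : Set M) N) :
    x ∈ spanTmul ((P ⊓ Q : Submodule K M) : Set M) N := by
  let b := Module.Free.chooseBasis K N
  have expand : ∀ y : M ⊗[K] N,
      y = ∑ j, TensorProduct.rid K M (map LinearMap.id (b.coord j) y) ⊗ₜ[K] b j := by
    intro y
    induction y using TensorProduct.induction_on with
    | zero => simp
    | tmul u v =>
      simp only [map_tmul, LinearMap.id_apply, rid_tmul, Module.Basis.coord_apply, smul_tmul,
        ← tmul_sum, b.sum_repr]
    | add y z hy hz =>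
      conv_lhs => rw [hy, hz]
      simp only [map_add, add_tmul, Finset.sum_add_distrib]
  rw [expand x]
  exact Submodule.sum_mem _ fun j _ => Submodule.subset_span
    ⟨_, ⟨rid_map_mem_of_mem_spanTmul _ hP, rid_map_mem_of_mem_spanTmul _ hQ⟩, _, rfl⟩

theorem mul_mem_spanTmul {A C : Type*} [Ring A] [Algebra K A] [Ring C] [Algebra K C] {s : Set A}
    (hs : ∀ a ∈ s, ∀ b ∈ s, a * b ∈ s) {x y : A ⊗[K] C} (hx : x ∈ spanTmul s C)
    (hy : y ∈ spanTmul s C) : x * y ∈ spanTmul s C := by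
  induction hx using Submodule.span_induction with
  | mem x hx =>
    obtain ⟨a, ha, c, rfl⟩ := hx
    induction hy using Submodule.span_induction with
    | mem y hy =>
      obtain ⟨b, hb, d, rfl⟩ := hy
      rw [Algebra.TensorProduct.tmul_mul_tmul]
      exact Submodule.subset_span ⟨_, hs a ha b hb, _, rfl⟩
    | zero => simp
    | add y z _ _ hy hz => simpa [mul_add] using Submodule.add_mem _ hy hz
    | smul r y _ hy => simpa using Submodule.smul_mem _ r hy
  | zero => simp
  | add x z _ _ hx hz => simpa [add_mul] using Submodule.add_mem _ hx hz
  | smul r x _ hx => simpa using Submodule.smul_mem _ r hx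

end SpanTmul

theorem mul'_map_mem_of_forall_mem {K A : Type*} [CommSemiring K] [Semiring A] [Algebra K A]
    {S : Subalgebra K A} {f g : A →ₗ[K] A} (hf : ∀ a, f a ∈ S) (hg : ∀ a, g a ∈ S)
    (x : A ⊗[K] A) : LinearMap.mul' K A (map f g x) ∈ S := by
  induction x using TensorProduct.induction_on with
  | zero => simp
  | tmul a b => simpa using S.mul_mem (hf a) (hg b)
  | add x y hx hy => simpa using S.add_mem hx hy

namespace WHA

variable {B : Type} [NormedRing B] [StarRing B] [CStarRing B] [NormedAlgebra ℂ B]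
  [StarModule ℂ B] [FiniteDimensional ℂ B] (W : WHA B)

theorem star_comul (b : B) : star (W.Δ b) = W.Δ (star b) := by
  rw [W.comul_star, tensorStar_eq_star]

theorem star_comul_one : star (W.Δ 1) = W.Δ 1 := by
  rw [star_comul, star_one]

theorem weak_comul_one' : map W.Δ LinearMap.id (W.Δ 1) =
    (TensorProduct.assoc ℂ B B B).symm ((1 : B) ⊗ₜ[ℂ] W.Δ 1) * (W.Δ 1 ⊗ₜ[ℂ] (1 : B)) := by
  have star_map : ∀ t : B ⊗[ℂ] B,
      star (map W.Δ LinearMap.id t) = map W.Δ LinearMap.id (star t) := by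
    intro t
    induction t using TensorProduct.induction_on with
    | zero => simp
    | tmul x y => simp [star_comul]
    | add u v hu hv => simp only [map_add, star_add, hu, hv]
  have star_assoc_symm : ∀ t : B ⊗[ℂ] (B ⊗[ℂ] B),
      star ((TensorProduct.assoc ℂ B B B).symm t) =
        (TensorProduct.assoc ℂ B B B).symm (star t) := by
    intro t
    induction t using TensorProduct.induction_on with
    | zero => simp
    | tmul x u =>
      induction u using TensorProduct.induction_on with
      | zero => simp
      | tmul y z => simp
      | add u v hu hv => simp only [tmul_add, map_add, star_add, hu, hv]
    | add u v hu hv => simp only [map_add, star_add, hu, hv]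
  have h := congrArg star W.weak_comul_one
  rwa [star_map, star_comul_one, star_mul, star_assoc_symm, star_tmul, star_tmul, star_one,
    star_comul_one] at h

theorem comul_one_mul (x : B) : W.Δ 1 * W.Δ x = W.Δ x := by
  rw [← W.comul_mul, one_mul]

theorem comul_mul_one (x : B) : W.Δ x * W.Δ 1 = W.Δ x := by
  rw [← W.comul_mul, mul_one]

theorem εt_one : W.εt 1 = 1 := by
  rw [εt, ← Algebra.TensorProduct.one_def, mul_one, W.counit_left]

theorem εs_one : W.εs 1 = 1 := by
  rw [εs, ← Algebra.TensorProduct.one_def, one_mul, W.counit_right]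

theorem εt_eq_mul_antipode (x : B) :
    W.εt x = LinearMap.mul' ℂ B (map LinearMap.id W.S (W.Δ x)) :=
  (W.antipode_left x).symm

theorem εs_eq_antipode_mul (x : B) :
    W.εs x = LinearMap.mul' ℂ B (map W.S LinearMap.id (W.Δ x)) :=
  (W.antipode_right x).symm

def εtₗ : B →ₗ[ℂ] B := LinearMap.mul' ℂ B ∘ₗ map LinearMap.id W.S ∘ₗ W.Δ

@[simp]
theorem εtₗ_apply (x : B) : W.εtₗ x = W.εt x := W.antipode_left x

/-- The map `ε'_s(w) = (id ⊗ ε)(Δ(1)(1 ⊗ w))` of Böhm–Nill–Szlachányi. -/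
def εs' : B →ₗ[ℂ] B :=
  (TensorProduct.rid ℂ B).toLinearMap ∘ₗ map LinearMap.id W.ε ∘ₗ
    LinearMap.mulLeft ℂ (W.Δ 1) ∘ₗ TensorProduct.mk ℂ B B 1

section SweedlerSums

variable {W} {s : Finset (B × B)}

theorem εt_eq_sum (hs : W.Δ 1 = ∑ p ∈ s, p.1 ⊗ₜ[ℂ] p.2) (y : B) :
    W.εt y = ∑ p ∈ s, W.ε (p.1 * y) • p.2 := by
  simp [εt, hs, Finset.sum_mul, Algebra.TensorProduct.tmul_mul_tmul]

theorem εs'_eq_sum (hs : W.Δ 1 = ∑ p ∈ s, p.1 ⊗ₜ[ℂ] p.2) (w : B) :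
    W.εs' w = ∑ p ∈ s, W.ε (p.2 * w) • p.1 := by
  simp [εs', hs, Finset.sum_mul, Algebra.TensorProduct.tmul_mul_tmul]

theorem map_comul_comul_one_eq_sum (hs : W.Δ 1 = ∑ p ∈ s, p.1 ⊗ₜ[ℂ] p.2) :
    map W.Δ LinearMap.id (W.Δ 1) = ∑ p ∈ s, (((1 : B) ⊗ₜ[ℂ] p.1) * W.Δ 1) ⊗ₜ[ℂ] p.2 := by
  rw [W.weak_comul_one', hs]
  simp [sum_tmul, tmul_sum, Finset.sum_mul, Finset.mul_sum, Algebra.TensorProduct.tmul_mul_tmul]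
  exact Finset.sum_comm

theorem map_id_comul_comul_one_eq_sum (hs : W.Δ 1 = ∑ p ∈ s, p.1 ⊗ₜ[ℂ] p.2) :
    map LinearMap.id W.Δ (W.Δ 1) = ∑ p ∈ s, p.1 ⊗ₜ[ℂ] ((p.2 ⊗ₜ[ℂ] (1 : B)) * W.Δ 1) := by
  rw [← W.coassoc, W.weak_comul_one, hs]
  simp [sum_tmul, tmul_sum, Finset.sum_mul, Finset.mul_sum, Algebra.TensorProduct.tmul_mul_tmul]
  exact Finset.sum_comm

end SweedlerSums

theorem map_antipode_comul_one :
    map W.S LinearMap.id (W.Δ 1) = map W.εtₗ LinearMap.id (W.Δ 1) := by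
  obtain ⟨s, hs⟩ := exists_finset (W.Δ 1)
  have hεt : ∑ q ∈ s, q.1 * W.S q.2 = 1 := by
    rw [← W.εt_one, εt_eq_mul_antipode, hs]
    simp
  have h := congrArg (map (LinearMap.mul' ℂ B ∘ₗ map LinearMap.id W.S) LinearMap.id)
    (map_comul_comul_one_eq_sum hs)
  rw [map_map] at h
  change map W.εtₗ LinearMap.id (W.Δ 1) = _ at h
  rw [h, hs]
  simp only [map_sum, map_tmul, LinearMap.comp_apply, LinearMap.id_coe, id_eq, Finset.mul_sum,
    Algebra.TensorProduct.tmul_mul_tmul, one_mul, LinearMap.mul'_apply, W.antipode_mul,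
    ← mul_assoc]
  refine Finset.sum_congr rfl fun p _ => ?_
  rw [← Finset.sum_mul, hεt, one_mul]

theorem comul_εt (y : B) : W.Δ (W.εt y) = (W.εt y ⊗ₜ[ℂ] 1) * W.Δ 1 := by
  obtain ⟨s, hs⟩ := exists_finset (W.Δ 1)
  have h := congrArg ((TensorProduct.lid ℂ (B ⊗[ℂ] B)).toLinearMap ∘ₗ
    map (W.ε ∘ₗ LinearMap.mulRight ℂ y) LinearMap.id) (map_id_comul_comul_one_eq_sum hs)
  conv_lhs at h => rw [hs]
  simp only [map_sum, LinearMap.comp_apply, map_tmul, LinearEquiv.coe_toLinearMap, lid_tmul,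
    LinearMap.mulRight_apply, LinearMap.id_coe, id_eq] at h
  rw [εt_eq_sum hs, map_sum]
  simp only [map_smul]
  rw [h, sum_tmul, Finset.sum_mul]
  refine Finset.sum_congr rfl fun p _ => ?_
  rw [← smul_tmul', smul_mul_assoc]

theorem comul_εt_mul (v w : B) : W.Δ (W.εt v * w) = (W.εt v ⊗ₜ[ℂ] 1) * W.Δ w := by
  rw [W.comul_mul, comul_εt, mul_assoc, comul_one_mul]

theorem εt_εt_mul (v w : B) : W.εt (W.εt v * w) = W.εt v * W.εt w := by
  obtain ⟨t, ht⟩ := exists_finset (W.Δ w)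
  rw [εt_eq_mul_antipode, εt_eq_mul_antipode _ w, comul_εt_mul, ht]
  simp [Finset.mul_sum, Algebra.TensorProduct.tmul_mul_tmul, mul_assoc]

theorem comul_one_mul_one_tmul (w : B) :
    W.Δ 1 * ((1 : B) ⊗ₜ[ℂ] w) = map W.εs' LinearMap.id (W.Δ w) := by
  obtain ⟨s, hs⟩ := exists_finset (W.Δ 1)
  obtain ⟨t, ht⟩ := exists_finset (W.Δ w)
  have counit : ∀ u : B ⊗[ℂ] B,
      map LinearMap.id ((TensorProduct.lid ℂ B).toLinearMap ∘ₗ map W.ε LinearMap.id)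
        (map LinearMap.id W.Δ u) = u := by
    intro u
    rw [map_map, LinearMap.id_comp,
      show ((TensorProduct.lid ℂ B).toLinearMap ∘ₗ map W.ε LinearMap.id) ∘ₗ W.Δ = LinearMap.id from
        LinearMap.ext W.counit_left, map_id, LinearMap.id_apply]
  have expand : map LinearMap.id W.Δ (W.Δ 1 * ((1 : B) ⊗ₜ[ℂ] w)) =
      ∑ p ∈ s, p.1 ⊗ₜ[ℂ] ((p.2 ⊗ₜ[ℂ] (1 : B)) * W.Δ w) := by
    have h := congrArg (· * ((1 : B) ⊗ₜ[ℂ] W.Δ w)) (map_id_comul_comul_one_eq_sum hs)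
    simp only [Finset.sum_mul, Algebra.TensorProduct.tmul_mul_tmul, mul_one, mul_assoc,
      comul_one_mul] at h
    rw [← h, hs]
    simp [Finset.sum_mul, Algebra.TensorProduct.tmul_mul_tmul, W.comul_mul]
  rw [← counit (W.Δ 1 * _), expand, ht]
  simp [εs'_eq_sum hs, Finset.mul_sum, tmul_sum, sum_tmul, Algebra.TensorProduct.tmul_mul_tmul,
    smul_tmul']
  exact Finset.sum_comm

theorem εt_εs' (w : B) : W.εt (W.εs' w) = W.εt w := by
  obtain ⟨s, hs⟩ := exists_finset (W.Δ 1)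
  rw [εt_eq_sum hs, εt_eq_sum hs]
  refine Finset.sum_congr rfl fun q _ => ?_
  have h := W.weak_counit q.1 1 w
  rw [hs] at h
  simp only [map_sum, map_tmul, LinearMap.comp_apply, LinearMap.mulLeft_apply,
    LinearMap.mulRight_apply, lid_tmul, smul_eq_mul, mul_one] at h
  rw [εs'_eq_sum hs, Finset.mul_sum, map_sum, ← h]
  simp [mul_comm]

theorem map_εt_comul_one_mul (x : B) :
    map W.εtₗ LinearMap.id (W.Δ 1 * ((1 : B) ⊗ₜ[ℂ] x)) = map W.εtₗ LinearMap.id (W.Δ x) := by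
  rw [comul_one_mul_one_tmul, map_map]
  congr 1
  ext w
  simp [εt_εs']

theorem comul_one_mul_tmul_one (w : B) :
    W.Δ 1 * (w ⊗ₜ[ℂ] (1 : B)) = map LinearMap.id W.εtₗ (W.Δ w) := by
  obtain ⟨s, hs⟩ := exists_finset (W.Δ 1)
  obtain ⟨t, ht⟩ := exists_finset (W.Δ w)
  have counit : ∀ u : B ⊗[ℂ] B, map
      ((TensorProduct.rid ℂ B).toLinearMap ∘ₗ map LinearMap.id W.ε) LinearMap.id
        (map W.Δ LinearMap.id u) = u := by
    intro u
    rw [map_map, LinearMap.id_comp,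
      show ((TensorProduct.rid ℂ B).toLinearMap ∘ₗ map LinearMap.id W.ε) ∘ₗ W.Δ = LinearMap.id from
        LinearMap.ext W.counit_right, map_id, LinearMap.id_apply]
  have expand : map W.Δ LinearMap.id (W.Δ 1 * (w ⊗ₜ[ℂ] (1 : B))) =
      ∑ p ∈ s, (((1 : B) ⊗ₜ[ℂ] p.1) * W.Δ w) ⊗ₜ[ℂ] p.2 := by
    have h := congrArg (· * (W.Δ w ⊗ₜ[ℂ] (1 : B))) (map_comul_comul_one_eq_sum hs)
    simp only [Finset.sum_mul, Algebra.TensorProduct.tmul_mul_tmul, mul_one, mul_assoc,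
      comul_one_mul] at h
    rw [← h, hs]
    simp [Finset.sum_mul, Algebra.TensorProduct.tmul_mul_tmul, W.comul_mul]
  rw [← counit (W.Δ 1 * _), expand, ht]
  simp [εt_eq_sum hs, Finset.mul_sum, tmul_sum, sum_tmul, Algebra.TensorProduct.tmul_mul_tmul,
    smul_tmul']
  exact Finset.sum_comm

theorem antipode_mul_εt (w : B) :
    LinearMap.mul' ℂ B (map W.S W.εtₗ (W.Δ w)) = W.S w := by
  obtain ⟨s, hs⟩ := exists_finset (W.Δ 1)
  have hεs : ∑ p ∈ s, W.S p.1 * p.2 = 1 := by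
    rw [← W.εs_one, εs_eq_antipode_mul, hs]
    simp
  rw [← LinearMap.comp_id W.S, ← LinearMap.id_comp W.εtₗ, ← map_map, ← comul_one_mul_tmul_one, hs]
  simp [Finset.sum_mul, Algebra.TensorProduct.tmul_mul_tmul, W.antipode_mul, mul_assoc,
    ← Finset.mul_sum, hεs]

theorem εt_tmul_one_mul_map_εt_comul_one (v : B) :
    (W.εt v ⊗ₜ[ℂ] (1 : B)) * map W.εtₗ LinearMap.id (W.Δ 1) =
      map W.εtₗ LinearMap.id (W.Δ 1) * ((1 : B) ⊗ₜ[ℂ] W.εt v) := by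
  obtain ⟨s, hs⟩ := exists_finset (W.Δ 1)
  calc (W.εt v ⊗ₜ[ℂ] (1 : B)) * map W.εtₗ LinearMap.id (W.Δ 1)
      = map W.εtₗ LinearMap.id ((W.εt v ⊗ₜ[ℂ] (1 : B)) * W.Δ 1) := by
        rw [hs]
        simp [Finset.mul_sum, Algebra.TensorProduct.tmul_mul_tmul, εt_εt_mul]
    _ = map W.εtₗ LinearMap.id (W.Δ 1 * ((1 : B) ⊗ₜ[ℂ] W.εt v)) := by
        rw [← comul_εt, map_εt_comul_one_mul]
    _ = map W.εtₗ LinearMap.id (W.Δ 1) * ((1 : B) ⊗ₜ[ℂ] W.εt v) := by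
        rw [hs]
        simp [Finset.sum_mul, Algebra.TensorProduct.tmul_mul_tmul]

/-- Coassociativity in Sweedler form: `f(x₁₁) g(x₁₂) h(x₂) = f(x₁) g(x₂₁) h(x₂₂)`. -/
theorem mul'_map_comul_assoc (f g h : B →ₗ[ℂ] B) (x : B) :
    LinearMap.mul' ℂ B (map (LinearMap.mul' ℂ B ∘ₗ map f g ∘ₗ W.Δ) h (W.Δ x)) =
      LinearMap.mul' ℂ B (map f (LinearMap.mul' ℂ B ∘ₗ map g h ∘ₗ W.Δ) (W.Δ x)) := by
  have mul_assoc₃ : ∀ T : (B ⊗[ℂ] B) ⊗[ℂ] B,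
      LinearMap.mul' ℂ B (map (LinearMap.mul' ℂ B ∘ₗ map f g) h T) =
        LinearMap.mul' ℂ B
          (map f (LinearMap.mul' ℂ B ∘ₗ map g h) (TensorProduct.assoc ℂ B B B T)) := by
    intro T
    induction T using TensorProduct.induction_on with
    | zero => simp
    | tmul P z =>
      induction P using TensorProduct.induction_on with
      | zero => simp
      | tmul a b => simp [mul_assoc]
      | add P Q hP hQ => simp only [add_tmul, map_add, hP, hQ]
    | add T U hT hU => simp only [map_add, hT, hU]
  calc _ = LinearMap.mul' ℂ B
          (map (LinearMap.mul' ℂ B ∘ₗ map f g) h (map W.Δ LinearMap.id (W.Δ x))) := by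
        rw [map_map]; rfl
    _ = _ := by rw [mul_assoc₃, W.coassoc, map_map]; rfl

theorem mem_centralizer_Bt_iff {b : B} :
    b ∈ Subalgebra.centralizer ℂ (W.Bt : Set B) ↔ ∀ y, W.εt y * b = b * W.εt y := by
  refine ⟨fun hb y => Subalgebra.mem_centralizer_iff ℂ |>.mp hb _ (Submodule.subset_span ⟨y, rfl⟩),
    fun hb => Subalgebra.mem_centralizer_iff ℂ |>.mpr fun z hz => ?_⟩
  induction hz using Submodule.span_induction with
  | mem z hz => obtain ⟨y, rfl⟩ := hz; exact hb y
  | zero => simp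
  | add u v _ _ hu hv => rw [add_mul, mul_add, hu, hv]
  | smul r u _ hu => rw [smul_mul_assoc, mul_smul_comm, hu]

def adₗ (b : B) : B →ₗ[ℂ] B := LinearMap.mul' ℂ B ∘ₗ map W.S (LinearMap.mulLeft ℂ b) ∘ₗ W.Δ

@[simp]
theorem adₗ_apply (b x : B) : W.adₗ b x = W.ad b x := rfl

theorem ad_add_left (b c x : B) : W.ad (b + c) x = W.ad b x + W.ad c x := by
  obtain ⟨t, ht⟩ := exists_finset (W.Δ x)
  simp [ad, ht, add_mul, mul_add, Finset.sum_add_distrib]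

theorem ad_smul_left (r : ℂ) (b x : B) : W.ad (r • b) x = r • W.ad b x := by
  obtain ⟨t, ht⟩ := exists_finset (W.Δ x)
  simp [ad, ht, Finset.smul_sum]

theorem ad_one_left (x : B) : W.ad 1 x = W.εs x := by
  rw [ad, LinearMap.mulLeft_one]
  exact W.antipode_right x

theorem ad_ad_one_right (b x : B) : W.ad (W.ad b x) 1 = W.ad b x := by
  obtain ⟨s, hs⟩ := exists_finset (W.Δ 1)
  obtain ⟨t, ht⟩ := exists_finset (W.Δ x)
  conv_rhs => rw [ad, ← W.comul_mul_one x]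
  rw [ad, ad, hs, ht]
  simp [Finset.sum_mul, Finset.mul_sum, Algebra.TensorProduct.tmul_mul_tmul, W.antipode_mul,
    mul_assoc]

theorem ad_one_right_eq (c : B) :
    W.ad c 1 = LinearMap.mul' ℂ B (map W.εtₗ (LinearMap.mulLeft ℂ c) (W.Δ 1)) := by
  have h := congrArg (LinearMap.mul' ℂ B ∘ₗ map LinearMap.id (LinearMap.mulLeft ℂ c))
    W.map_antipode_comul_one
  simp only [LinearMap.comp_apply, map_map, LinearMap.id_comp, LinearMap.comp_id] at h
  exact h

theorem ad_one_right_mem_centralizer (c : B) :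
    W.ad c 1 ∈ Subalgebra.centralizer ℂ (W.Bt : Set B) := by
  rw [mem_centralizer_Bt_iff]
  intro y
  obtain ⟨s, hs⟩ := exists_finset (W.Δ 1)
  have h := congrArg (LinearMap.mul' ℂ B ∘ₗ map LinearMap.id (LinearMap.mulLeft ℂ c))
    (W.εt_tmul_one_mul_map_εt_comul_one y)
  rw [hs] at h
  rw [ad_one_right_eq, hs]
  simpa [Finset.mul_sum, Finset.sum_mul, Algebra.TensorProduct.tmul_mul_tmul, mul_assoc] using h

theorem ad_mem_centralizer (c x : B) : W.ad c x ∈ Subalgebra.centralizer ℂ (W.Bt : Set B) := by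
  rw [← ad_ad_one_right]
  exact W.ad_one_right_mem_centralizer _

theorem ad_one_right_of_mem_centralizer {b : B} (hb : b ∈ Subalgebra.centralizer ℂ (W.Bt : Set B)) :
    W.ad b 1 = b := by
  obtain ⟨s, hs⟩ := exists_finset (W.Δ 1)
  have hεs : ∑ p ∈ s, W.εt p.1 * p.2 = 1 := by
    have h := congrArg (LinearMap.mul' ℂ B) W.map_antipode_comul_one
    rw [← εs_eq_antipode_mul, εs_one, hs] at h
    simpa using h.symm
  rw [mem_centralizer_Bt_iff] at hb
  rw [ad_one_right_eq, hs]
  simp only [map_sum, map_tmul, LinearMap.mul'_apply, LinearMap.mulLeft_apply, εtₗ_apply,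
    ← mul_assoc, hb]
  simp only [mul_assoc, ← Finset.mul_sum, hεs, mul_one]

theorem mul'_map_ad_comul (c w : B) :
    LinearMap.mul' ℂ B (map LinearMap.id (W.adₗ c) (W.Δ w)) =
      LinearMap.mul' ℂ B (map W.εtₗ (LinearMap.mulLeft ℂ c) (W.Δ w)) :=
  (W.mul'_map_comul_assoc LinearMap.id W.S (LinearMap.mulLeft ℂ c) w).symm

theorem ad_mul_of_mem_centralizer {b : B} (hb : b ∈ Subalgebra.centralizer ℂ (W.Bt : Set B))
    (c x : B) : W.ad (b * c) x = LinearMap.mul' ℂ B (map (W.adₗ b) (W.adₗ c) (W.Δ x)) := by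
  rw [mem_centralizer_Bt_iff] at hb
  have hS : LinearMap.mul' ℂ B ∘ₗ map W.S W.εtₗ ∘ₗ W.Δ = W.S := LinearMap.ext W.antipode_mul_εt
  have commute_b : LinearMap.mul' ℂ B ∘ₗ map W.εtₗ (LinearMap.mulLeft ℂ (b * c)) ∘ₗ W.Δ =
      LinearMap.mul' ℂ B ∘ₗ map (LinearMap.mulLeft ℂ b) (W.adₗ c) ∘ₗ W.Δ := by
    ext y
    obtain ⟨t, ht⟩ := exists_finset (W.Δ y)
    have h := W.mul'_map_ad_comul c y
    simp only [LinearMap.comp_apply, ht, map_sum, map_tmul, LinearMap.mul'_apply,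
      LinearMap.mulLeft_apply, LinearMap.id_apply, adₗ_apply, εtₗ_apply] at h ⊢
    calc ∑ k ∈ t, W.εt k.1 * (b * c * k.2) = b * ∑ k ∈ t, W.εt k.1 * (c * k.2) := by
          simp only [Finset.mul_sum, ← mul_assoc, hb]
      _ = ∑ k ∈ t, b * k.1 * W.ad c k.2 := by
          rw [← h, Finset.mul_sum]
          simp only [mul_assoc]
  calc W.ad (b * c) x
      = LinearMap.mul' ℂ B (map (LinearMap.mul' ℂ B ∘ₗ map W.S W.εtₗ ∘ₗ W.Δ)
          (LinearMap.mulLeft ℂ (b * c)) (W.Δ x)) := by rw [hS]; rfl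
    _ = LinearMap.mul' ℂ B (map W.S (LinearMap.mul' ℂ B ∘ₗ
          map (LinearMap.mulLeft ℂ b) (W.adₗ c) ∘ₗ W.Δ) (W.Δ x)) := by
        rw [mul'_map_comul_assoc, commute_b]
    _ = _ := (W.mul'_map_comul_assoc _ _ _ x).symm

theorem isInvariant_iff (J : Submodule ℂ B) : W.IsInvariant J ↔
    (∀ b ∈ J, ∀ x, W.ad b x ∈ J) ∧ (J : Set B) ⊆ Subalgebra.centralizer ℂ (W.Bt : Set B) := by
  constructor
  · intro hJ
    refine ⟨fun b hb x => hJ ▸ Submodule.subset_span ⟨b, hb, x, rfl⟩, fun b hb => ?_⟩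
    rw [SetLike.mem_coe, ← hJ] at hb
    induction hb using Submodule.span_induction with
    | mem y hy => obtain ⟨c, -, x, rfl⟩ := hy; exact W.ad_mem_centralizer c x
    | zero => exact Subalgebra.zero_mem _
    | add u v _ _ hu hv => exact Subalgebra.add_mem _ hu hv
    | smul r u _ hu => exact Subalgebra.smul_mem _ hu r
  · rintro ⟨had, hcent⟩
    refine le_antisymm (Submodule.span_le.mpr ?_) fun b hb => ?_
    · rintro _ ⟨b, hb, x, rfl⟩
      exact had b hb x
    · exact Submodule.subset_span ⟨b, hb, 1, (W.ad_one_right_of_mem_centralizer (hcent hb)).symm⟩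

theorem Bs_le_of_isInvariant {J : Submodule ℂ B} (hJ : W.IsCoideal J) (hInv : W.IsInvariant J) :
    W.Bs ≤ J := by
  refine Submodule.span_le.mpr ?_
  rintro _ ⟨x, rfl⟩
  rw [← ad_one_left]
  exact ((W.isInvariant_iff J).mp hInv).1 1 hJ.1 x

theorem isCoideal_inf {I I' : Submodule ℂ B} (hI : W.IsCoideal I) (hI' : W.IsCoideal I') :
    W.IsCoideal (I ⊓ I') :=
  ⟨⟨hI.1, hI'.1⟩, fun a ha b hb => ⟨hI.2.1 a ha.1 b hb.1, hI'.2.1 a ha.2 b hb.2⟩,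
    fun a ha => ⟨hI.2.2.1 a ha.1, hI'.2.2.1 a ha.2⟩,
    fun a ha => mem_spanTmul_inf (hI.2.2.2 a ha.1) (hI'.2.2.2 a ha.2)⟩

theorem isCoideal_adjoin {s : Set B} (one_mem : (1 : B) ∈ s) (star_mem : ∀ a ∈ s, star a ∈ s)
    (comul_mem : ∀ a ∈ s, W.Δ a ∈ spanTmul s B) :
    W.IsCoideal (Subalgebra.toSubmodule (Algebra.adjoin ℂ s)) := by
  set A := Algebra.adjoin ℂ s
  have comul_mem_A : ∀ a ∈ s, W.Δ a ∈ spanTmul (A : Set B) B := fun a ha =>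
    spanTmul_mono Algebra.subset_adjoin (comul_mem a ha)
  refine ⟨A.one_mem, fun a ha b hb => A.mul_mem ha hb, fun a ha => ?_, fun a ha => ?_⟩
  · have h : star a ∈ Algebra.adjoin ℂ (star s) := by
      rwa [← Subalgebra.star_adjoin_comm, Subalgebra.mem_star_iff, star_star]
    exact Algebra.adjoin_mono (fun b hb => star_star b ▸ star_mem _ hb) h
  · induction ha using Algebra.adjoin_induction with
    | mem a ha => exact comul_mem_A a ha
    | algebraMap r =>
      rw [Algebra.algebraMap_eq_smul_one, map_smul]
      exact Submodule.smul_mem _ r (comul_mem_A 1 one_mem)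
    | add a b _ _ ha hb => simpa using Submodule.add_mem _ ha hb
    | mul a b _ _ ha hb =>
      rw [W.comul_mul]
      exact mul_mem_spanTmul (fun a ha b hb => A.mul_mem ha hb) ha hb

theorem ad_mem_adjoin {s : Set B} (one_mem : (1 : B) ∈ s)
    (hcent : s ⊆ Subalgebra.centralizer ℂ (W.Bt : Set B))
    (had : ∀ a ∈ s, ∀ x, W.ad a x ∈ Algebra.adjoin ℂ s) {a : B} (ha : a ∈ Algebra.adjoin ℂ s)
    (x : B) : W.ad a x ∈ Algebra.adjoin ℂ s := by
  induction ha using Algebra.adjoin_induction generalizing x with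
  | mem a ha => exact had a ha x
  | algebraMap r =>
    rw [Algebra.algebraMap_eq_smul_one, ad_smul_left]
    exact Subalgebra.smul_mem _ (had 1 one_mem x) r
  | add a b _ _ ha hb => rw [ad_add_left]; exact Subalgebra.add_mem _ (ha x) (hb x)
  | mul a b ha _ iha ihb =>
    rw [W.ad_mul_of_mem_centralizer (Algebra.adjoin_le hcent ha)]
    exact mul'_map_mem_of_forall_mem iha ihb _

end WHA

/-- invariant coideals form a sublattice of the lattice of coideals,
with minimal element `B_s` and maximal element the commutant of `B_t`. -/
theorem invariant_coideals_sublattice {B : Type} [NormedRing B] [StarRing B] [CStarRing B]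
    [NormedAlgebra ℂ B] [StarModule ℂ B] [FiniteDimensional ℂ B] (W : WHA B)
    (I I' : Submodule ℂ B)
    (hI : W.IsCoideal I) (hI' : W.IsCoideal I')
    (hInv : W.IsInvariant I) (hInv' : W.IsInvariant I') :
    -- the intersection is an invariant coideal
    (W.IsCoideal (I ⊓ I') ∧ W.IsInvariant (I ⊓ I')) ∧
    -- the `*`-subalgebra generated by the union is an invariant coideal
    (W.IsCoideal (Subalgebra.toSubmodule (Algebra.adjoin ℂ ((I : Set B) ∪ (I' : Set B)))) ∧
      W.IsInvariant (Subalgebra.toSubmodule (Algebra.adjoin ℂ ((I : Set B) ∪ (I' : Set B))))) ∧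
    -- every invariant coideal contains `B_s` and is contained in the commutant of `B_t`
    (∀ J : Submodule ℂ B, W.IsCoideal J → W.IsInvariant J →
      W.Bs ≤ J ∧ (J : Set B) ⊆ {b : B | ∀ z ∈ W.Bt, b * z = z * b}) := by
  obtain ⟨hadI, hcentI⟩ := (W.isInvariant_iff I).mp hInv
  obtain ⟨hadI', hcentI'⟩ := (W.isInvariant_iff I').mp hInv'
  set s := (I : Set B) ∪ I'
  have one_mem : (1 : B) ∈ s := .inl hI.1
  have hcent : s ⊆ Subalgebra.centralizer ℂ (W.Bt : Set B) := Set.union_subset hcentI hcentI'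
  have star_mem : ∀ a ∈ s, star a ∈ s := by
    rintro a (ha | ha)
    exacts [.inl (hI.2.2.1 a ha), .inr (hI'.2.2.1 a ha)]
  have comul_mem : ∀ a ∈ s, W.Δ a ∈ spanTmul s B := by
    rintro a (ha | ha)
    exacts [spanTmul_mono Set.subset_union_left (hI.2.2.2 a ha),
      spanTmul_mono Set.subset_union_right (hI'.2.2.2 a ha)]
  have ad_mem : ∀ a ∈ s, ∀ x, W.ad a x ∈ Algebra.adjoin ℂ s := by
    rintro a (ha | ha) x
    exacts [Algebra.subset_adjoin (.inl (hadI a ha x)),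
      Algebra.subset_adjoin (.inr (hadI' a ha x))]
  refine ⟨⟨W.isCoideal_inf hI hI', (W.isInvariant_iff _).mpr
      ⟨fun b hb x => ⟨hadI b hb.1 x, hadI' b hb.2 x⟩, fun b hb => hcentI hb.1⟩⟩,
    ⟨W.isCoideal_adjoin one_mem star_mem comul_mem, (W.isInvariant_iff _).mpr
      ⟨fun a ha => W.ad_mem_adjoin one_mem hcent ad_mem ha, Algebra.adjoin_le hcent⟩⟩,
    fun J hJ hInvJ => ⟨W.Bs_le_of_isInvariant hJ hInvJ, fun b hb z hz => ?_⟩⟩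
  exact ((Subalgebra.mem_centralizer_iff ℂ).mp (((W.isInvariant_iff J).mp hInvJ).2 hb) z hz).symm

end
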